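/- Let ṽ : ℝ³ → ℝ² and θ : ℝ³ → ℝ be smooth and 1-periodic in the horizontal variables, and suppose ∫_{−h}^0 div_H ṽ(x_H,ζ) dζ = 0 for every x_H. Set w(ṽ)(x_H,x₃) = −∫_{−h}^{x₃} div_H ṽ(x_H,ζ) dζ, ũ = (ṽ, w(ṽ)), and Θ(x_H,x₃) = ∫_{−h}^{x₃} θ(x_H,ζ) dζ. Then ∫_𝒪 [ Θ² θ (ũ·∇)θ + θ² Θ ( ∫_{−h}^{x₃} [(ũ·∇)θ](x_H,ζ) dζ ) ] dx = ∫_𝒪 θ² Θ [ ∫_{−h}^{x₃} [(ṽ·∇_H)θ](x_H,ζ) dζ − [(ṽ·∇_H)Θ](x) + ∫_{−h}^{x₃} div_H ṽ(x_H,ζ) θ(x_H,ζ) dζ ] dx. -/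

import Mathlib

/-!
Write `Θ = vint h θ`, `w = wv h ṽ`, `ũ = (ṽ, w)` and `F = (θ Θ)²`. Since `∂₃ w = -div_H ṽ`, the
field `ũ` is divergence free, so `div (ũ F) = ũ·∇F = 2 θ Θ (Θ ũ·∇θ + θ ũ·∇Θ)`, where
`ũ·∇Θ = ṽ·∇_H Θ + w θ` because `∂₃ Θ = θ`. Integrating by parts in `x₃`, and using `w = 0` at
`x₃ = -h`, gives `∫_{-h}^{x₃} w ∂₃θ = w θ + ∫_{-h}^{x₃} div_H ṽ θ`. Together these identify the
difference of the two integrands with `div (ũ F) / 2`. Its integral over the box vanishes by the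
divergence theorem: the lateral faces cancel by horizontal periodicity, and `w` vanishes on the
bottom and, by the hypothesis on `∫_{-h}^0 div_H ṽ`, on the top.
-/

open MeasureTheory Real

noncomputable section

/-- Partial derivative of `f` in the `j`-th coordinate direction. -/
def pd (j : Fin 3) (f : (Fin 3 → ℝ) → ℝ) (x : Fin 3 → ℝ) : ℝ :=
  fderiv ℝ f x (Pi.single j 1)

/-- `f` is 1-periodic in the two horizontal variables. -/
def HorizPeriodic (f : (Fin 3 → ℝ) → ℝ) : Prop :=
  ∀ x : Fin 3 → ℝ, f (x + Pi.single 0 1) = f x ∧ f (x + Pi.single 1 1) = f x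

/-- The fundamental domain `[0,1] × [0,1] × [-h,0]` of `𝒪 = 𝕋² × (-h,0)`. -/
def Box (h : ℝ) : Set (Fin 3 → ℝ) := Set.Icc ![0, 0, -h] ![1, 1, 0]

/-- Horizontal divergence `div_H v = ∂₁ v¹ + ∂₂ v²`. -/
def divH (v : Fin 2 → (Fin 3 → ℝ) → ℝ) (x : Fin 3 → ℝ) : ℝ :=
  pd 0 (v 0) x + pd 1 (v 1) x

/-- Horizontal advection `(v · ∇_H) g = v¹ ∂₁ g + v² ∂₂ g`. -/
def advH (v : Fin 2 → (Fin 3 → ℝ) → ℝ) (g : (Fin 3 → ℝ) → ℝ) (x : Fin 3 → ℝ) : ℝ :=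
  v 0 x * pd 0 g x + v 1 x * pd 1 g x

/-- Advection `(u · ∇) g` by the full velocity field `u = (v, w)`. -/
def adv3 (v : Fin 2 → (Fin 3 → ℝ) → ℝ) (w g : (Fin 3 → ℝ) → ℝ) (x : Fin 3 → ℝ) : ℝ :=
  v 0 x * pd 0 g x + v 1 x * pd 1 g x + w x * pd 2 g x

/-- Vertical velocity `w(v)(x) = -∫_{-h}^{x₃} div_H v (x_H, ζ) dζ`. -/
def wv (h : ℝ) (v : Fin 2 → (Fin 3 → ℝ) → ℝ) (x : Fin 3 → ℝ) : ℝ :=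
  -(∫ ζ in (-h)..(x 2), divH v (Function.update x 2 ζ))

/-- Vertical primitive `Θ(x) = ∫_{-h}^{x₃} θ(x_H, ζ) dζ`. -/
def vint (h : ℝ) (θ : (Fin 3 → ℝ) → ℝ) (x : Fin 3 → ℝ) : ℝ :=
  ∫ ζ in (-h)..(x 2), θ (Function.update x 2 ζ)


section PartialDerivatives

variable {f g : (Fin 3 → ℝ) → ℝ} {x : Fin 3 → ℝ}

lemma contDiff_pd {n : WithTop ℕ∞} (hf : ContDiff ℝ (n + 1) f) (j : Fin 3) :
    ContDiff ℝ n (pd j f) :=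
  (hf.fderiv_right le_rfl).clm_apply contDiff_const

lemma continuous_pd (hf : ContDiff ℝ 1 f) (j : Fin 3) : Continuous (pd j f) :=
  (hf.continuous_fderiv one_ne_zero).clm_apply continuous_const

lemma pd_mul (hf : DifferentiableAt ℝ f x) (hg : DifferentiableAt ℝ g x) (j : Fin 3) :
    pd j (fun y => f y * g y) x = pd j f x * g x + f x * pd j g x := by
  simp only [pd, fderiv_fun_mul hf hg, add_apply, smul_apply, smul_eq_mul]
  ring

lemma contDiff_divH {n : WithTop ℕ∞} {v : Fin 2 → (Fin 3 → ℝ) → ℝ}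
    (hv : ∀ i, ContDiff ℝ (n + 1) (v i)) : ContDiff ℝ n (divH v) :=
  (contDiff_pd (hv 0) 0).add (contDiff_pd (hv 1) 1)

end PartialDerivatives

section VerticalLines

variable {f : (Fin 3 → ℝ) → ℝ} {x : Fin 3 → ℝ} {ζ : ℝ}

def horizProj : (Fin 3 → ℝ) →L[ℝ] (Fin 3 → ℝ) :=
  ContinuousLinearMap.id ℝ _ - (ContinuousLinearMap.proj 2).smulRight (Pi.single 2 1)

lemma update_two_eq (x : Fin 3 → ℝ) (ζ : ℝ) :
    Function.update x 2 ζ = horizProj x + ζ • Pi.single 2 1 := by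
  ext i
  by_cases hi : i = 2
  · subst hi; simp [horizProj]
  · simp [horizProj, hi]

lemma horizProj_single (j : Fin 3) :
    horizProj (Pi.single j 1) = if j = 2 then 0 else Pi.single j 1 := by
  by_cases hj : j = 2
  · subst hj; simp [horizProj]
  · simp [horizProj, hj]

lemma continuous_update_two :
    Continuous fun p : (Fin 3 → ℝ) × ℝ => Function.update p.1 2 p.2 :=
  continuous_fst.update 2 continuous_snd

lemma Continuous.comp_update_two (hf : Continuous f) (x : Fin 3 → ℝ) :
    Continuous fun ζ => f (Function.update x 2 ζ) :=
  hf.comp (continuous_const.update 2 continuous_id)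

lemma hasFDerivAt_comp_update_two (hf : DifferentiableAt ℝ f (Function.update x 2 ζ)) :
    HasFDerivAt (fun y => f (Function.update y 2 ζ))
      ((fderiv ℝ f (Function.update x 2 ζ)).comp horizProj) x := by
  simp_rw [update_two_eq] at hf ⊢
  exact hf.hasFDerivAt.comp x (horizProj.hasFDerivAt.add_const _)

lemma hasDerivAt_comp_update_two (hf : DifferentiableAt ℝ f (Function.update x 2 ζ)) :
    HasDerivAt (fun ξ => f (Function.update x 2 ξ)) (pd 2 f (Function.update x 2 ζ)) ζ :=
  hf.hasFDerivAt.comp_hasDerivAt ζ (hasDerivAt_update x 2 ζ)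

lemma continuous_fderiv_comp_update_two (hf : ContDiff ℝ 1 f) :
    Continuous fun p : (Fin 3 → ℝ) × ℝ =>
      (fderiv ℝ f (Function.update p.1 2 p.2)).comp horizProj :=
  ((hf.continuous_fderiv one_ne_zero).comp continuous_update_two).clm_comp continuous_const

lemma hasFDerivAt_integral_comp_update_two (hf : ContDiff ℝ 1 f) (a b : ℝ) (x : Fin 3 → ℝ) :
    HasFDerivAt (fun y => ∫ ζ in a..b, f (Function.update y 2 ζ))
      (∫ ζ in a..b, (fderiv ℝ f (Function.update x 2 ζ)).comp horizProj) x := by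
  have hF := hf.continuous.comp continuous_update_two
  have hF' := continuous_fderiv_comp_update_two hf
  obtain ⟨C, hC⟩ := ((isCompact_closedBall x 1).prod isCompact_uIcc).exists_bound_of_continuousOn
    hF'.continuousOn
  exact intervalIntegral.hasFDerivAt_integral_of_dominated_of_fderiv_le (bound := fun _ => C)
    (Metric.ball_mem_nhds x one_pos)
    (.of_forall fun y => (hF.comp (Continuous.prodMk_right y)).aestronglyMeasurable)
    ((hF.comp (Continuous.prodMk_right x)).intervalIntegrable a b)
    (hF'.comp (Continuous.prodMk_right x)).aestronglyMeasurable
    (.of_forall fun ζ hζ y hy =>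
      hC (y, ζ) ⟨Metric.ball_subset_closedBall hy, Set.uIoc_subset_uIcc hζ⟩)
    intervalIntegrable_const
    (.of_forall fun ζ _ y _ => hasFDerivAt_comp_update_two (hf.differentiable one_ne_zero _))

end VerticalLines

section VerticalPrimitive

variable {f g : (Fin 3 → ℝ) → ℝ}

/- `vint h f x = G x (x 2)` with `G y t = ∫ ζ in -h..t, f (update y 2 ζ)`, and `G` is
differentiable because both of its partial derivatives are continuous. -/
lemma hasFDerivAt_vint (hf : ContDiff ℝ 1 f) (h : ℝ) (x : Fin 3 → ℝ) :
    HasFDerivAt (vint h f)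
      ((∫ ζ in (-h)..(x 2), (fderiv ℝ f (Function.update x 2 ζ)).comp horizProj)
        + f x • ContinuousLinearMap.proj 2) x := by
  have hF := hf.continuous.comp continuous_update_two
  set G : (Fin 3 → ℝ) → ℝ → ℝ := fun y t => ∫ ζ in (-h)..t, f (Function.update y 2 ζ)
  set G₁ : (Fin 3 → ℝ) → ℝ → (Fin 3 → ℝ) →L[ℝ] ℝ :=
    fun y t => ∫ ζ in (-h)..t, (fderiv ℝ f (Function.update y 2 ζ)).comp horizProj
  set G₂ : (Fin 3 → ℝ) → ℝ → ℝ →L[ℝ] ℝ :=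
    fun y t => ContinuousLinearMap.toSpanSingleton ℝ (f (Function.update y 2 t))
  have hG₁ : ∀ p : (Fin 3 → ℝ) × ℝ, HasFDerivAt (G · p.2) (↿G₁ p) p.1 :=
    fun p => hasFDerivAt_integral_comp_update_two hf _ _ _
  have hG₂ : ∀ p : (Fin 3 → ℝ) × ℝ, HasFDerivAt (G p.1 ·) (↿G₂ p) p.2 := fun p =>
    have hFp := hF.comp (Continuous.prodMk_right p.1)
    (intervalIntegral.integral_hasDerivAt_right (hFp.intervalIntegrable _ _)
      hFp.aestronglyMeasurable.stronglyMeasurableAtFilter hFp.continuousAt).hasFDerivAt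
  have hcG₁ : Continuous ↿G₁ :=
    intervalIntegral.continuous_parametric_intervalIntegral_of_continuous
      (f := fun (p : (Fin 3 → ℝ) × ℝ) ζ => (fderiv ℝ f (Function.update p.1 2 ζ)).comp horizProj)
      ((continuous_fderiv_comp_update_two hf).comp
        ((continuous_fst.comp continuous_fst).prodMk continuous_snd)) continuous_snd
  have hcG₂ : Continuous ↿G₂ := ContinuousLinearMap.toSpanSingletonCLE.continuous.comp hF
  have hG := hasStrictFDerivAt_uncurry_coprod (.of_forall hG₁) (.of_forall hG₂)
    hcG₁.continuousAt hcG₂.continuousAt (u := (x, x 2))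
  have hdiag : HasFDerivAt (fun y : Fin 3 → ℝ => (y, y 2))
      ((ContinuousLinearMap.id ℝ _).prod (ContinuousLinearMap.proj 2)) x :=
    (hasFDerivAt_id x).prodMk (hasFDerivAt_apply 2 x)
  refine (hG.hasFDerivAt.comp x hdiag).congr_fderiv ?_
  ext v
  change G₁ x (x 2) v + G₂ x (x 2) (v 2) = _
  simp [G₁, G₂, mul_comm]

lemma differentiable_vint (hf : ContDiff ℝ 1 f) (h : ℝ) : Differentiable ℝ (vint h f) :=
  fun x => (hasFDerivAt_vint hf h x).differentiableAt

lemma pd_vint_eq (hf : ContDiff ℝ 1 f) (h : ℝ) (j : Fin 3) (x : Fin 3 → ℝ) :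
    pd j (vint h f) x
      = (∫ ζ in (-h)..(x 2), fderiv ℝ f (Function.update x 2 ζ) (horizProj (Pi.single j 1)))
        + f x * Pi.single (M := fun _ => ℝ) j 1 2 := by
  have hint : IntervalIntegrable
      (fun ζ => (fderiv ℝ f (Function.update x 2 ζ)).comp horizProj) volume (-h) (x 2) :=
    ((continuous_fderiv_comp_update_two hf).comp (Continuous.prodMk_right x)).intervalIntegrable _ _
  rw [pd, (hasFDerivAt_vint hf h x).fderiv, add_apply,
    ContinuousLinearMap.intervalIntegral_apply hint]
  rfl

lemma pd_two_vint (hf : ContDiff ℝ 1 f) (h : ℝ) (x : Fin 3 → ℝ) : pd 2 (vint h f) x = f x := by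
  rw [pd_vint_eq hf]
  simp [horizProj_single]

lemma pd_vint_of_ne_two (hf : ContDiff ℝ 1 f) (h : ℝ) {j : Fin 3} (hj : j ≠ 2) (x : Fin 3 → ℝ) :
    pd j (vint h f) x = vint h (pd j f) x := by
  rw [pd_vint_eq hf]
  simp [horizProj_single, hj, vint, pd]

lemma continuous_vint (hf : Continuous f) (h : ℝ) : Continuous (vint h f) :=
  intervalIntegral.continuous_parametric_intervalIntegral_of_continuous
    (f := fun x ζ => f (Function.update x 2 ζ)) (hf.comp continuous_update_two)
    (continuous_apply 2)

lemma continuous_pd_vint (hf : ContDiff ℝ 1 f) (h : ℝ) (j : Fin 3) :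
    Continuous (pd j (vint h f)) := by
  by_cases hj : j = 2
  · subst hj
    simpa only [funext (pd_two_vint hf h)] using hf.continuous
  · simpa only [funext (pd_vint_of_ne_two hf h hj)] using continuous_vint (continuous_pd hf j) h

lemma vint_add (hf : Continuous f) (hg : Continuous g) (h : ℝ) (x : Fin 3 → ℝ) :
    vint h (fun y => f y + g y) x = vint h f x + vint h g x :=
  intervalIntegral.integral_add ((hf.comp_update_two x).intervalIntegrable _ _)
    ((hg.comp_update_two x).intervalIntegrable _ _)

end VerticalPrimitive

section Periodicity

variable {f g : (Fin 3 → ℝ) → ℝ}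

lemma HorizPeriodic.mul (hf : HorizPeriodic f) (hg : HorizPeriodic g) :
    HorizPeriodic fun y => f y * g y :=
  fun x => ⟨congrArg₂ (· * ·) (hf x).1 (hg x).1, congrArg₂ (· * ·) (hf x).2 (hg x).2⟩

lemma HorizPeriodic.pow (hf : HorizPeriodic f) (n : ℕ) : HorizPeriodic fun y => f y ^ n :=
  fun x => ⟨congrArg (· ^ n) (hf x).1, congrArg (· ^ n) (hf x).2⟩

lemma horizPeriodic_vint (hf : HorizPeriodic f) (h : ℝ) : HorizPeriodic (vint h f) := by
  have shift : ∀ {i : Fin 3}, i ≠ 2 → (∀ y, f (y + Pi.single i 1) = f y) →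
      ∀ x, vint h f (x + Pi.single i 1) = vint h f x := by
    intro i hi hfi x
    have hupd : ∀ ζ, Function.update (x + Pi.single i 1) 2 ζ
        = Function.update x 2 ζ + Pi.single i 1 := by
      intro ζ
      ext k
      by_cases hk : k = 2
      · subst hk; simp [Pi.single_eq_of_ne' hi]
      · simp [hk]
    simp [vint, hupd, hfi, Pi.single_eq_of_ne' hi]
  exact fun x => ⟨shift (by decide) (fun y => (hf y).1) x, shift (by decide) (fun y => (hf y).2) x⟩

end Periodicity

section VerticalVelocity

variable {v : Fin 2 → (Fin 3 → ℝ) → ℝ} {θ : (Fin 3 → ℝ) → ℝ}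

lemma continuous_wv (hv : Continuous (divH v)) (h : ℝ) : Continuous (wv h v) :=
  (continuous_vint hv h).neg

lemma differentiable_wv (hv : ContDiff ℝ 1 (divH v)) (h : ℝ) : Differentiable ℝ (wv h v) :=
  (differentiable_vint hv h).neg

lemma pd_two_wv (hv : ContDiff ℝ 1 (divH v)) (h : ℝ) (x : Fin 3 → ℝ) :
    pd 2 (wv h v) x = -divH v x := by
  rw [show wv h v = -vint h (divH v) from rfl, pd, fderiv_neg, neg_apply]
  exact congrArg Neg.neg (pd_two_vint hv h x)

lemma vint_wv_mul_pd_two (hv : Continuous (divH v)) (hθ : ContDiff ℝ 1 θ) (h : ℝ)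
    (x : Fin 3 → ℝ) :
    vint h (fun y => wv h v y * pd 2 θ y) x
      = wv h v x * θ x + vint h (fun y => divH v y * θ y) x := by
  have hdivx := hv.comp_update_two x
  have hw : ∀ ζ, HasDerivAt (fun ξ => wv h v (Function.update x 2 ξ))
      (-divH v (Function.update x 2 ζ)) ζ := fun ζ => by
    simpa [wv] using (intervalIntegral.integral_hasDerivAt_right (hdivx.intervalIntegrable _ _)
      hdivx.aestronglyMeasurable.stronglyMeasurableAtFilter hdivx.continuousAt).fun_neg
  have hibp := intervalIntegral.integral_mul_deriv_eq_deriv_mul (a := -h) (b := x 2)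
    (fun ζ _ => hw ζ)
    (fun ζ _ => hasDerivAt_comp_update_two (x := x) (hθ.differentiable one_ne_zero _))
    (hdivx.neg.intervalIntegrable _ _)
    (((continuous_pd hθ 2).comp_update_two x).intervalIntegrable _ _)
  simp only [vint] at hibp ⊢
  rw [hibp]
  simp [wv, intervalIntegral.integral_neg]

end VerticalVelocity

section Advection

variable {v : Fin 2 → (Fin 3 → ℝ) → ℝ} {w θ : (Fin 3 → ℝ) → ℝ} {h : ℝ} {x : Fin 3 → ℝ}

lemma adv3_eq_advH_add (v : Fin 2 → (Fin 3 → ℝ) → ℝ) (w g : (Fin 3 → ℝ) → ℝ) :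
    adv3 v w g = fun y => advH v g y + w y * pd 2 g y :=
  rfl

lemma continuous_advH {g : (Fin 3 → ℝ) → ℝ} (hv : ∀ i, Continuous (v i))
    (hg : ∀ j, Continuous (pd j g)) : Continuous (advH v g) :=
  ((hv 0).mul (hg 0)).add ((hv 1).mul (hg 1))

lemma continuous_adv3 {g : (Fin 3 → ℝ) → ℝ} (hv : ∀ i, Continuous (v i)) (hw : Continuous w)
    (hg : ∀ j, Continuous (pd j g)) : Continuous (adv3 v w g) :=
  (continuous_advH hv hg).add (hw.mul (hg 2))

lemma adv3_mul {f g : (Fin 3 → ℝ) → ℝ} (hf : DifferentiableAt ℝ f x)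
    (hg : DifferentiableAt ℝ g x) :
    adv3 v w (fun y => f y * g y) x = adv3 v w f x * g x + f x * adv3 v w g x := by
  simp only [adv3, pd_mul hf hg]
  ring

lemma adv3_sq {f : (Fin 3 → ℝ) → ℝ} (hf : Differentiable ℝ f) :
    adv3 v w (fun y => f y ^ 2) x = 2 * f x * adv3 v w f x := by
  simp only [sq]
  rw [adv3_mul (hf x) (hf x)]
  ring

lemma adv3_vint (hθ : ContDiff ℝ 1 θ) :
    adv3 v w (vint h θ) x = advH v (vint h θ) x + w x * θ x := by
  simp only [adv3, advH, pd_two_vint hθ]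

lemma adv3_mul_vint (hθ : ContDiff ℝ 1 θ) :
    adv3 v w (fun y => θ y * vint h θ y) x
      = adv3 v w θ x * vint h θ x + θ x * (advH v (vint h θ) x + w x * θ x) := by
  rw [adv3_mul (hθ.differentiable one_ne_zero x) (differentiable_vint hθ h x), adv3_vint hθ]

lemma vint_adv3_wv (hv : ∀ i, Continuous (v i)) (hdiv : Continuous (divH v))
    (hθ : ContDiff ℝ 1 θ) (h : ℝ) (x : Fin 3 → ℝ) :
    vint h (adv3 v (wv h v) θ) x
      = vint h (advH v θ) x + wv h v x * θ x + vint h (fun y => divH v y * θ y) x := by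
  simp only [adv3_eq_advH_add]
  rw [vint_add (continuous_advH hv (continuous_pd hθ))
    ((continuous_wv hdiv h).fun_mul (continuous_pd hθ 2)), vint_wv_mul_pd_two hdiv hθ, add_assoc]

def transportFlux (v : Fin 2 → (Fin 3 → ℝ) → ℝ) (w F : (Fin 3 → ℝ) → ℝ) :
    Fin 3 → (Fin 3 → ℝ) → ℝ :=
  ![fun y => v 0 y * F y, fun y => v 1 y * F y, fun y => w y * F y]

lemma sum_pd_transportFlux {F : (Fin 3 → ℝ) → ℝ} (hv : ∀ i, DifferentiableAt ℝ (v i) x)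
    (hw : DifferentiableAt ℝ w x) (hF : DifferentiableAt ℝ F x) :
    ∑ i, pd i (transportFlux v w F i) x = (divH v x + pd 2 w x) * F x + adv3 v w F x := by
  simp only [Fin.sum_univ_three, transportFlux, Matrix.cons_val_zero, Matrix.cons_val_one,
    Matrix.cons_val_two, Matrix.head_cons, Matrix.tail_cons, pd_mul (hv _) hF, pd_mul hw hF,
    divH, adv3]
  ring

lemma sum_pd_transportFlux_wv {F : (Fin 3 → ℝ) → ℝ} (hv : ∀ i, DifferentiableAt ℝ (v i) x)
    (hdiv : ContDiff ℝ 1 (divH v)) (hF : DifferentiableAt ℝ F x) :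
    ∑ i, pd i (transportFlux v (wv h v) F i) x = adv3 v (wv h v) F x := by
  rw [sum_pd_transportFlux hv (differentiable_wv hdiv h x) hF, pd_two_wv hdiv, add_neg_cancel,
    zero_mul, zero_add]

end Advection

section DivergenceTheorem

lemma Fin.insertNth_add_single {M : Type*} [AddMonoid M] {n : ℕ} (i : Fin (n + 1)) (a b : M)
    (y : Fin n → M) :
    (Fin.insertNth i (a + b) y : Fin (n + 1) → M) = Fin.insertNth i a y + Pi.single i b := by
  ext k
  refine Fin.succAboveCases i ?_ (fun k => ?_) k <;> simp

lemma integral_box_sum_pd_eq_zero {h : ℝ} (hh : 0 ≤ h) {u : Fin 3 → (Fin 3 → ℝ) → ℝ}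
    (hu : ∀ i, Differentiable ℝ (u i)) (hu₀ : HorizPeriodic (u 0)) (hu₁ : HorizPeriodic (u 1))
    (hu₂_top : ∀ x, x 2 = 0 → u 2 x = 0) (hu₂_bot : ∀ x, x 2 = -h → u 2 x = 0)
    (hint : IntegrableOn (fun x => ∑ i, pd i (u i) x) (Box h)) :
    ∫ x in Box h, ∑ i, pd i (u i) x = 0 := by
  have hab : (![0, 0, -h] : Fin 3 → ℝ) ≤ ![1, 1, 0] := by
    intro i; fin_cases i <;> simp [hh]
  refine (integral_divergence_of_hasFDerivAt_off_countable' _ _ hab u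
    (fun i x => fderiv ℝ (u i) x) ∅ Set.countable_empty (fun i => (hu i).continuous.continuousOn)
    (fun x _ i => (hu i x).hasFDerivAt) hint).trans
    (Finset.sum_eq_zero fun i _ => sub_eq_zero.2 (integral_congr_ae (.of_forall fun y => ?_)))
  fin_cases i
  · have := (hu₀ (Fin.insertNth 0 0 y)).1
    rw [← Fin.insertNth_add_single, zero_add] at this
    simpa using this
  · have := (hu₁ (Fin.insertNth 1 0 y)).2
    rw [← Fin.insertNth_add_single, zero_add] at this
    simpa using this
  · simp [hu₂_top, hu₂_bot]

lemma integral_box_adv3_wv_eq_zero {h : ℝ} (hh : 0 ≤ h) {v : Fin 2 → (Fin 3 → ℝ) → ℝ}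
    (hv : ∀ i, Differentiable ℝ (v i)) (hv_per : ∀ i, HorizPeriodic (v i))
    (hdiv : ContDiff ℝ 1 (divH v))
    (hdiv_zero : ∀ x : Fin 3 → ℝ, ∫ ζ in (-h)..0, divH v (Function.update x 2 ζ) = 0)
    {F : (Fin 3 → ℝ) → ℝ} (hF : Differentiable ℝ F) (hF_per : HorizPeriodic F)
    (hint : IntegrableOn (fun x => adv3 v (wv h v) F x) (Box h)) :
    ∫ x in Box h, adv3 v (wv h v) F x = 0 := by
  have hflux : ∀ x, adv3 v (wv h v) F x = ∑ i, pd i (transportFlux v (wv h v) F i) x :=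
    fun x => (sum_pd_transportFlux_wv (fun i => hv i x) hdiv (hF x)).symm
  simp only [hflux] at hint ⊢
  refine integral_box_sum_pd_eq_zero hh (fun i => ?_) ((hv_per 0).mul hF_per)
    ((hv_per 1).mul hF_per) (fun x hx => by simp [transportFlux, wv, hx, hdiv_zero])
    (fun x hx => by simp [transportFlux, wv, hx]) hint
  fin_cases i
  exacts [(hv 0).fun_mul hF, (hv 1).fun_mul hF, (differentiable_wv hdiv h).fun_mul hF]

end DivergenceTheorem

/-- cancellation used in the estimate for `‖θ‖·‖∇_H Θ‖`. -/
theorem statement7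
    (h : ℝ) (hh : 0 < h)
    (vt : Fin 2 → (Fin 3 → ℝ) → ℝ)
    (hvt_smooth : ∀ i, ContDiff ℝ (⊤ : ℕ∞) (vt i))
    (hvt_per : ∀ i, HorizPeriodic (vt i))
    (θ : (Fin 3 → ℝ) → ℝ)
    (hθ_smooth : ContDiff ℝ (⊤ : ℕ∞) θ) (hθ_per : HorizPeriodic θ)
    (hdiv : ∀ x : Fin 3 → ℝ, (∫ ζ in (-h)..(0:ℝ), divH vt (Function.update x 2 ζ)) = 0) :
    (∫ x in Box h,
        ((vint h θ x) ^ 2 * θ x * adv3 vt (wv h vt) θ x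
          + θ x ^ 2 * vint h θ x
              * (∫ ζ in (-h)..(x 2), adv3 vt (wv h vt) θ (Function.update x 2 ζ))))
      = ∫ x in Box h,
          θ x ^ 2 * vint h θ x
            * ((∫ ζ in (-h)..(x 2), advH vt θ (Function.update x 2 ζ))
                - advH vt (vint h θ) x
                + (∫ ζ in (-h)..(x 2),
                    divH vt (Function.update x 2 ζ) * θ (Function.update x 2 ζ))) := by
  have hθ : ContDiff ℝ 1 θ := hθ_smooth.of_le (WithTop.coe_le_coe.2 le_top)
  have hv : ∀ i, ContDiff ℝ 2 (vt i) := fun i => (hvt_smooth i).of_le (WithTop.coe_le_coe.2 le_top)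
  have hvd : ∀ i, Differentiable ℝ (vt i) := fun i => (hv i).differentiable two_ne_zero
  have hdivH : ContDiff ℝ 1 (divH vt) := contDiff_divH hv
  have hθΘ : Differentiable ℝ fun y => θ y * vint h θ y :=
    (hθ.differentiable one_ne_zero).fun_mul (differentiable_vint hθ h)
  have hθΘ_per : HorizPeriodic fun y => θ y * vint h θ y := hθ_per.mul (horizPeriodic_vint hθ_per h)
  have hcv := fun i => (hvd i).continuous
  have hvint := vint_adv3_wv hcv hdivH.continuous hθ h
  simp only [vint] at hvint
  have hcw := continuous_wv hdivH.continuous h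
  have hcadv3θ := continuous_adv3 hcv hcw (continuous_pd hθ)
  have hcadvHθ := continuous_advH hcv (continuous_pd hθ)
  have hcadvHΘ := continuous_advH hcv (continuous_pd_vint hθ h)
  have hcΘ := continuous_vint hθ.continuous h
  rw [← sub_eq_zero, ← integral_sub ?_ ?_]
  · calc _ = ∫ x in Box h, adv3 vt (wv h vt) (fun y => (θ y * vint h θ y) ^ 2) x / 2 :=
          integral_congr_ae (.of_forall fun x => by
            simp only [adv3_sq hθΘ, adv3_mul_vint hθ, hvint]
            ring)
      _ = 0 := by
        rw [integral_div, integral_box_adv3_wv_eq_zero hh.le hvd hvt_per hdivH hdiv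
          (hθΘ.fun_pow 2) (hθΘ_per.pow 2) ?_, zero_div]
        simp only [adv3_sq hθΘ, adv3_mul_vint hθ]
        exact Continuous.integrableOn_Icc (by fun_prop)
  all_goals exact Continuous.integrableOn_Icc (by fun_prop)
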